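/- arXiv:2102.04292 — 2 statements merged into one kernel-verified Lean document; each statement's English description precedes it below -/
import Mathlib

section
/- For every level k ≥ 1 of the sector tree of the heptagrid, the total number of nodes at level k satisfies b k + g k + y k = fib (2k), where fib is the Fibonacci sequence with fib 1 = fib 2 = 1. (In the paper's convention f_0 = f_1 = 1, this is the statement that the number of tiles at distance k within a sector of the heptagrid is f_{2k-1}.) -/
/-- For the sector tree of the heptagrid (blue nodes have a blue
and a green son, green and yellow nodes have a blue, a green and a yellow son,
the root is green), the number of nodes at level `k ≥ 1` is `fib (2k)`,
where `fib` is the Fibonacci sequence with `fib 1 = fib 2 = 1`. -/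
theorem heptagrid_sector_level_count (b g y : ℕ → ℕ)
    (hb1 : b 1 = 0) (hg1 : g 1 = 1) (hy1 : y 1 = 0)
    (hb : ∀ k ≥ 1, b (k + 1) = b k + g k + y k)
    (hg : ∀ k ≥ 1, g (k + 1) = b k + g k + y k)
    (hy : ∀ k ≥ 1, y (k + 1) = g k + y k) :
    ∀ k ≥ 1, b k + g k + y k = Nat.fib (2 * k) := by
  have key : ∀ k ≥ 1, b k + g k + y k = Nat.fib (2 * k) ∧
      g k + y k = Nat.fib (2 * k - 1) := by
    intro k hk
    induction k with
    | zero => omega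
    | succ n ih =>
      rcases Nat.eq_or_lt_of_le hk with h | h
      · simp [← h, hb1, hg1, hy1]
      · have hn : n ≥ 1 := by omega
        obtain ⟨h1, h2⟩ := ih hn
        rw [hb n hn, hg n hn, hy n hn]
        constructor
        · have : 2 * (n + 1) = 2 * n + 2 := by ring
          rw [this, Nat.fib_add_two, Nat.fib_add_one (by omega)]
          omega
        · have : 2 * (n + 1) - 1 = 2 * n + 1 := by omega
          rw [this, Nat.fib_add_one (by omega)]
          omega
  exact fun k hk => (key k hk).1
end

section
/- For every k ≥ 1, the number of tiles of the heptagrid at distance exactly k from a fixed central tile equals 7 · (b k + g k + y k) = 7 · fib (2k); in particular, a circle of radius 4 in the heptagrid contains 7 · fib 8 = 7 · 21 = 147 tiles. -/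
/-- The heptagrid splits into 7 sectors around a fixed central tile,
each generated by the sector tree; hence the number of tiles at distance exactly `k ≥ 1`
from the central tile, i.e. the number of tiles of the circle of radius `k`, equals
`7 * (b k + g k + y k) = 7 * fib (2k)`; in particular a circle of radius `4`
contains `7 * fib 8 = 7 * 21 = 147` tiles. -/
theorem heptagrid_circle_count (b g y : ℕ → ℕ)
    (hb1 : b 1 = 0) (hg1 : g 1 = 1) (hy1 : y 1 = 0)
    (hb : ∀ k ≥ 1, b (k + 1) = b k + g k + y k)
    (hg : ∀ k ≥ 1, g (k + 1) = b k + g k + y k)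
    (hy : ∀ k ≥ 1, y (k + 1) = g k + y k) :
    (∀ k ≥ 1, 7 * (b k + g k + y k) = 7 * Nat.fib (2 * k)) ∧
    7 * (b 4 + g 4 + y 4) = 147 ∧
    7 * Nat.fib 8 = 7 * 21 ∧ 7 * 21 = 147 := by
  have key : ∀ k ≥ 1, b k + g k + y k = Nat.fib (2 * k) ∧
      g k + y k = Nat.fib (2 * k - 1) := by
    intro k hk
    induction k with
    | zero => omega
    | succ n ih =>
      rcases Nat.eq_or_lt_of_le hk with h | h
      · simp [← h, hb1, hg1, hy1]
      · have hn : n ≥ 1 := by omega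
        obtain ⟨hs, ht⟩ := ih hn
        constructor
        · rw [hb n hn, hg n hn, hy n hn]
          have e1 : 2 * (n + 1) = 2 * n + 2 := by omega
          have e2 : 2 * n + 1 = (2 * n - 1) + 2 := by omega
          rw [e1, Nat.fib_add_two, e2, Nat.fib_add_two]
          have h2 : (2 * n - 1) + 1 = 2 * n := by omega
          rw [h2]
          omega
        · rw [hg n hn, hy n hn]
          have e1 : 2 * (n + 1) - 1 = (2 * n - 1) + 2 := by omega
          rw [e1, Nat.fib_add_two]
          have h2 : (2 * n - 1) + 1 = 2 * n := by omega
          rw [h2]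
          omega
  refine ⟨fun k hk => by rw [(key k hk).1], ?_, by decide, rfl⟩
  rw [(key 4 (by norm_num)).1]
  decide
end
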